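/- arXiv:math/0607005 — 3 statements merged into one kernel-verified Lean document; each statement's English description precedes it below -/
import Mathlib

section
/- Let G be a group and let σ be a group automorphism of G with σ ∘ σ = id. Let H, A, K be subgroups of G such that: (a) σ(h) · h⁻¹ ∈ H for every h ∈ H; (b) σ(a) = a for every a ∈ A; (c) σ(K) = K; and (d) G = H A K, i.e. every x ∈ G can be written x = h a k with h ∈ H, a ∈ A, k ∈ K. Then: (1) for every x ∈ G there exists g ∈ H such that σ(x) K = g x K (equality of left cosets); (2) for every x ∈ G, the image under σ of the double coset H x K = {h x k : h ∈ H, k ∈ K} equals H x K; (3) every double coset H x K contains an element of A. -/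
open scoped Pointwise

/-- Abstract core of Lemma 3.2: given an involutive automorphism `σ` of a group `G`
and subgroups `H, A, K` with (a) `σ h * h⁻¹ ∈ H` for `h ∈ H`, (b) `σ` fixing `A`
pointwise, (c) `σ (K) = K`, and (d) a generalized Cartan decomposition `G = H A K`,
we have: (1) for every `x`, `σ x` and `g * x` lie in the same left `K`-coset for some
`g ∈ H`; (2) `σ` preserves each double coset `H x K`; (3) each double coset `H x K`
meets `A`. -/
theorem generalized_cartan_core {G : Type*} [Group G] (σ : G ≃* G)
    (hσσ : ∀ x : G, σ (σ x) = x)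
    (H A K : Subgroup G)
    (ha : ∀ h ∈ H, σ h * h⁻¹ ∈ H)
    (hb : ∀ a ∈ A, σ a = a)
    (hc : σ '' (K : Set G) = (K : Set G))
    (hd : ∀ x : G, ∃ h ∈ H, ∃ a ∈ A, ∃ k ∈ K, x = h * a * k) :
    (∀ x : G, ∃ g ∈ H, (σ x) • (K : Set G) = (g * x) • (K : Set G)) ∧
    (∀ x : G, σ '' {y : G | ∃ h ∈ H, ∃ k ∈ K, y = h * x * k}
        = {y : G | ∃ h ∈ H, ∃ k ∈ K, y = h * x * k}) ∧
    (∀ x : G, ∃ a ∈ A, ∃ h ∈ H, ∃ k ∈ K, a = h * x * k) := by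
  -- σ of an element of K is in K
  have hK : ∀ k ∈ K, σ k ∈ K := by
    intro k hk
    have : σ k ∈ σ '' (K : Set G) := ⟨k, hk, rfl⟩
    rwa [hc] at this
  -- σ of an element of H is in H
  have hH : ∀ h ∈ H, σ h ∈ H := by
    intro h hh
    have : σ h = (σ h * h⁻¹) * h := by group
    rw [this]
    exact H.mul_mem (ha h hh) hh
  -- key: σ x = (g * x) * k' with g ∈ H, k' ∈ K
  have key : ∀ x : G, ∃ g ∈ H, ∃ k' ∈ K, σ x = (g * x) * k' := by
    intro x
    obtain ⟨h, hh, a, haA, k, hk, rfl⟩ := hd x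
    refine ⟨σ h * h⁻¹, ha h hh, k⁻¹ * σ k, K.mul_mem (K.inv_mem hk) (hK k hk), ?_⟩
    have : σ (h * a * k) = σ h * σ a * σ k := by simp [map_mul]
    rw [this, hb a haA]
    group
  refine ⟨?_, ?_, ?_⟩
  · intro x
    obtain ⟨g, hg, k', hk', hx⟩ := key x
    refine ⟨g, hg, ?_⟩
    rw [leftCoset_eq_iff]
    have : (σ x)⁻¹ * (g * x) = k'⁻¹ := by rw [hx]; group
    rw [this]
    exact K.inv_mem hk'
  · intro x
    have incl : ∀ y : G, (∃ h ∈ H, ∃ k ∈ K, y = h * x * k) →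
        ∃ h ∈ H, ∃ k ∈ K, σ y = h * x * k := by
      rintro y ⟨h, hh, k, hk, rfl⟩
      obtain ⟨g, hg, k', hk', hx⟩ := key x
      refine ⟨σ h * g, H.mul_mem (hH h hh) hg, k' * σ k, K.mul_mem hk' (hK k hk), ?_⟩
      have : σ (h * x * k) = σ h * σ x * σ k := by simp [map_mul]
      rw [this, hx]
      group
    ext y
    constructor
    · rintro ⟨z, hz, rfl⟩
      exact incl z hz
    · intro hy
      refine ⟨σ y, ?_, hσσ y⟩
      exact incl y hy
  · intro x
    obtain ⟨h, hh, a, haA, k, hk, rfl⟩ := hd x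
    refine ⟨a, haA, h⁻¹, H.inv_mem hh, k⁻¹, K.inv_mem hk, ?_⟩
    group
end

section
/- Let L be a Lie algebra over a field k and let a ⊆ L be a Lie subalgebra. For a function λ : a → k define the weight space g(a;λ) := {X ∈ L : [H, X] = λ(H) • X for every H ∈ a}. Let σ and τ be Lie algebra automorphisms of L with σ ∘ τ = τ ∘ σ and σ(Y) = Y for all Y ∈ a. Let ε be a function from the set of functions a → k to k, and let τ_ε : L → L be a k-linear map such that τ_ε(X) = ε(λ) • τ(X) whenever X ∈ g(a;λ). If L is the sum of its weight spaces, i.e. the submodules g(a;λ) (over all λ : a → k) together span L, then σ ∘ τ_ε = τ_ε ∘ σ. -/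
/-- Lemma 5.4 (1), key computation: let `σ, τ` be commuting Lie algebra automorphisms
of `L` with `σ` fixing a Lie subalgebra `a` pointwise.  Let `τ_ε` be a `k`-linear map
acting on each weight space `g(a;λ)` by `τ_ε X = ε(λ) • τ X` for a signature-like
function `ε`.  If the weight spaces span `L`, then `σ` and `τ_ε` commute. -/
theorem sigma_commutes_with_twisted_involution
    {k : Type*} [Field k] {L : Type*} [LieRing L] [LieAlgebra k L]
    (a : LieSubalgebra k L) (σ τ : L ≃ₗ⁅k⁆ L)
    (hcomm : ∀ X : L, σ (τ X) = τ (σ X))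
    (hσ : ∀ Y ∈ a, σ Y = Y)
    (ε : (a → k) → k) (τε : L →ₗ[k] L)
    (hτε : ∀ (lam : a → k) (X : L),
      (∀ H : a, ⁅(H : L), X⁆ = lam H • X) → τε X = ε lam • τ X)
    (hspan : Submodule.span k
        (⋃ lam : a → k, {X : L | ∀ H : a, ⁅(H : L), X⁆ = lam H • X}) = ⊤) :
    ∀ X : L, σ (τε X) = τε (σ X) := by
  have hs : ∀ (c : k) (y : L), σ (c • y) = c • σ y := fun c y => map_smul σ.toLinearEquiv c y
  have hadd : ∀ y z : L, σ (y + z) = σ y + σ z := fun y z => map_add σ.toLinearEquiv y z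
  have h0 : σ (0 : L) = 0 := map_zero σ.toLinearEquiv
  intro X
  have hX : X ∈ Submodule.span k
      (⋃ lam : a → k, {X : L | ∀ H : a, ⁅(H : L), X⁆ = lam H • X}) := by
    rw [hspan]; trivial
  induction hX using Submodule.span_induction with
  | mem x hx =>
    obtain ⟨s, ⟨lam, rfl⟩, hx⟩ := hx
    have hσx : ∀ H : a, ⁅(H : L), σ x⁆ = lam H • σ x := by
      intro H
      have : σ (H : L) = (H : L) := hσ H H.2
      calc ⁅(H : L), σ x⁆ = ⁅σ (H : L), σ x⁆ := by rw [this]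
        _ = σ ⁅(H : L), x⁆ := (σ.map_lie _ _).symm
        _ = σ (lam H • x) := by rw [hx H]
        _ = lam H • σ x := hs _ _
    rw [hτε lam x hx, hτε lam (σ x) hσx, hs, hcomm]
  | zero => simp [map_zero, h0]
  | add x y _ _ hx hy => simp [map_add, hadd, hx, hy]
  | smul c x _ hx => simp [map_smul, hs, hx]
end

section
/- Fix integers p', q' ≥ 0 and set n := p' + q' + 1. In the space of 2n × 2n complex matrices define: g₀ := the diagonal matrix with diagonal entries (1,…,1 (p' times), −1,…,−1 (q'+1 times), 1,…,1 (p'+1 times), −1,…,−1 (q' times)); J_n := the 2n × 2n block matrix with blocks 0, −I_n over I_n, 0; and I_{n,n} := the block diagonal matrix diag(I_n, −I_n). Define maps on M(2n, ℂ) by θ(W) := g₀ W g₀⁻¹, τ(W) := J_n · conj(W) · J_n⁻¹, and σ(W) := I_{n,n} · conj(W) · I_{n,n}⁻¹, where conj denotes entrywise complex conjugation. Then σ ∘ θ = θ ∘ σ and σ ∘ τ = τ ∘ σ as maps M(2n, ℂ) → M(2n, ℂ). -/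
/-! Involutions on `M(2n, ℂ)` from Subsection 4.3 of the paper (Type II-1),
where `n = p' + q' + 1`. -/

/-- `g₀`: the diagonal matrix with diagonal entries
`(1,…,1 (p' times), −1,…,−1 (q'+1 times), 1,…,1 (p'+1 times), −1,…,−1 (q' times))`. -/
def gZero (p' q' : ℕ) : Matrix (Fin (2 * (p' + q' + 1))) (Fin (2 * (p' + q' + 1))) ℂ :=
  Matrix.diagonal fun i =>
    if (i : ℕ) < p' then 1
    else if (i : ℕ) < p' + q' + 1 then -1
    else if (i : ℕ) < (p' + q' + 1) + (p' + 1) then 1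
    else -1

/-- `J_n`: the `2n × 2n` block matrix `[[0, −I_n], [I_n, 0]]`. -/
def Jn (p' q' : ℕ) : Matrix (Fin (2 * (p' + q' + 1))) (Fin (2 * (p' + q' + 1))) ℂ :=
  fun i j =>
    if (i : ℕ) + (p' + q' + 1) = (j : ℕ) then -1
    else if (j : ℕ) + (p' + q' + 1) = (i : ℕ) then 1
    else 0

/-- `I_{n,n}`: the block diagonal matrix `diag(I_n, −I_n)`. -/
def Inn (p' q' : ℕ) : Matrix (Fin (2 * (p' + q' + 1))) (Fin (2 * (p' + q' + 1))) ℂ :=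
  Matrix.diagonal fun i => if (i : ℕ) < p' + q' + 1 then 1 else -1

/-- `θ(W) = g₀ W g₀⁻¹`. -/
noncomputable def thetaMap (p' q' : ℕ)
    (W : Matrix (Fin (2 * (p' + q' + 1))) (Fin (2 * (p' + q' + 1))) ℂ) :
    Matrix (Fin (2 * (p' + q' + 1))) (Fin (2 * (p' + q' + 1))) ℂ :=
  gZero p' q' * W * (gZero p' q')⁻¹

/-- `τ(W) = J_n ⬝ conj(W) ⬝ J_n⁻¹`, where `conj` is entrywise complex conjugation. -/
noncomputable def tauMap (p' q' : ℕ)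
    (W : Matrix (Fin (2 * (p' + q' + 1))) (Fin (2 * (p' + q' + 1))) ℂ) :
    Matrix (Fin (2 * (p' + q' + 1))) (Fin (2 * (p' + q' + 1))) ℂ :=
  Jn p' q' * W.map (starRingEnd ℂ) * (Jn p' q')⁻¹

/-- `σ(W) = I_{n,n} ⬝ conj(W) ⬝ I_{n,n}⁻¹`. -/
noncomputable def sigmaMap (p' q' : ℕ)
    (W : Matrix (Fin (2 * (p' + q' + 1))) (Fin (2 * (p' + q' + 1))) ℂ) :
    Matrix (Fin (2 * (p' + q' + 1))) (Fin (2 * (p' + q' + 1))) ℂ :=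
  Inn p' q' * W.map (starRingEnd ℂ) * (Inn p' q')⁻¹

/-- `g₀` is a real matrix. -/
lemma gZero_map (p' q' : ℕ) : (gZero p' q').map (starRingEnd ℂ) = gZero p' q' := by
  ext i j
  simp only [gZero, Matrix.map_apply, Matrix.diagonal_apply]
  split_ifs <;> simp

/-- `J_n` is a real matrix. -/
lemma Jn_map (p' q' : ℕ) : (Jn p' q').map (starRingEnd ℂ) = Jn p' q' := by
  ext i j
  simp only [Jn, Matrix.map_apply]
  split_ifs <;> simp

/-- `I_{n,n}` is a real matrix. -/
lemma Inn_map (p' q' : ℕ) : (Inn p' q').map (starRingEnd ℂ) = Inn p' q' := by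
  ext i j
  simp only [Inn, Matrix.map_apply, Matrix.diagonal_apply]
  split_ifs <;> simp

/-- `g₀² = 1`. -/
lemma gZero_sq (p' q' : ℕ) : gZero p' q' * gZero p' q' = 1 := by
  simp only [gZero, Matrix.diagonal_mul_diagonal]
  ext i j
  simp only [Matrix.diagonal_apply, Matrix.one_apply]
  split_ifs <;> norm_num

/-- `I_{n,n}² = 1`. -/
lemma Inn_sq (p' q' : ℕ) : Inn p' q' * Inn p' q' = 1 := by
  simp only [Inn, Matrix.diagonal_mul_diagonal]
  ext i j
  simp only [Matrix.diagonal_apply, Matrix.one_apply]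
  split_ifs <;> norm_num

/-- `J_n² = −1`. -/
lemma Jn_sq (p' q' : ℕ) : Jn p' q' * Jn p' q' = -1 := by
  ext i j
  rw [Matrix.mul_apply]
  have hi := i.isLt
  have hj := j.isLt
  have hone : (-1 : Matrix (Fin (2 * (p' + q' + 1))) (Fin (2 * (p' + q' + 1))) ℂ) i j
      = if (i : ℕ) = (j : ℕ) then -1 else 0 := by
    simp only [Matrix.neg_apply, Matrix.one_apply, Fin.ext_iff]
    split_ifs <;> norm_num
  rcases lt_or_ge (i : ℕ) (p' + q' + 1) with h | h
  · have hz : ∀ b : Fin (2 * (p' + q' + 1)),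
        b ≠ (⟨(i : ℕ) + (p' + q' + 1), by omega⟩ : Fin (2 * (p' + q' + 1))) →
        Jn p' q' i b * Jn p' q' b j = 0 := by
      intro b hb
      have h1 : ¬ ((i : ℕ) + (p' + q' + 1) = (b : ℕ)) := fun hh =>
        hb (Fin.ext (by simpa using hh.symm))
      have h2 : ¬ ((b : ℕ) + (p' + q' + 1) = (i : ℕ)) := by omega
      simp only [Jn, if_neg h1, if_neg h2, zero_mul]
    rw [Fintype.sum_eq_single _ hz, hone]
    simp only [Jn]
    split_ifs <;> first | (exfalso; omega) | norm_num
  · have hz : ∀ b : Fin (2 * (p' + q' + 1)),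
        b ≠ (⟨(i : ℕ) - (p' + q' + 1), by omega⟩ : Fin (2 * (p' + q' + 1))) →
        Jn p' q' i b * Jn p' q' b j = 0 := by
      intro b hb
      have h1 : ¬ ((i : ℕ) + (p' + q' + 1) = (b : ℕ)) := by omega
      have h2 : ¬ ((b : ℕ) + (p' + q' + 1) = (i : ℕ)) := fun hh =>
        hb (Fin.ext (show (b : ℕ) = (i : ℕ) - (p' + q' + 1) by omega))
      simp only [Jn, if_neg h1, if_neg h2, zero_mul]
    rw [Fintype.sum_eq_single _ hz, hone]
    simp only [Jn]
    split_ifs <;> first | (exfalso; omega) | norm_num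

lemma gZero_inv (p' q' : ℕ) : (gZero p' q')⁻¹ = gZero p' q' :=
  Matrix.inv_eq_right_inv (gZero_sq p' q')

lemma Inn_inv (p' q' : ℕ) : (Inn p' q')⁻¹ = Inn p' q' :=
  Matrix.inv_eq_right_inv (Inn_sq p' q')

lemma Jn_inv (p' q' : ℕ) : (Jn p' q')⁻¹ = -Jn p' q' :=
  Matrix.inv_eq_right_inv (by rw [mul_neg, Jn_sq, neg_neg])

/-- `I_{n,n}` commutes with `g₀` (both are diagonal). -/
lemma Inn_gZero_comm (p' q' : ℕ) : Inn p' q' * gZero p' q' = gZero p' q' * Inn p' q' := by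
  simp only [Inn, gZero, Matrix.diagonal_mul_diagonal, mul_comm]

/-- `I_{n,n}` anticommutes with `J_n`. -/
lemma Inn_Jn_anticomm (p' q' : ℕ) : Inn p' q' * Jn p' q' = -(Jn p' q' * Inn p' q') := by
  ext i j
  have hi := i.isLt
  have hj := j.isLt
  simp only [Inn, Jn, Matrix.diagonal_mul, Matrix.mul_diagonal, Matrix.neg_apply]
  split_ifs <;> first | (exfalso; omega) | ring1

/-- General noncommutative-ring identity for commuting conjugations. -/
lemma conj_comm_of_comm {R : Type*} [Ring R] (P G W : R) (h : P * G = G * P) :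
    P * (G * W * G) * P = G * (P * W * P) * G := by
  calc P * (G * W * G) * P = (P * G) * W * (G * P) := by noncomm_ring
    _ = (G * P) * W * (P * G) := by rw [h]
    _ = G * (P * W * P) * G := by noncomm_ring

/-- General noncommutative-ring identity for anticommuting conjugations. -/
lemma conj_comm_of_anticomm {R : Type*} [Ring R] (P J W : R) (h : P * J = -(J * P)) :
    P * (J * W * (-J)) * P = J * (P * W * P) * (-J) := by
  have hJP : (-J) * P = P * J := by rw [neg_mul, ← h]
  have hPJ : P * (-J) = J * P := by rw [mul_neg, h, neg_neg]
  have e1 : P * (J * W * (-J)) * P = (P * J) * W * ((-J) * P) := by noncomm_ring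
  have e2 : J * (P * W * P) * (-J) = (J * P) * W * (P * (-J)) := by noncomm_ring
  rw [e1, e2, hJP, hPJ, h]
  noncomm_ring

/-- Subsection 4.3 (Type II-1): the involution `σ` commutes with both `θ` and `τ`
as maps `M(2n, ℂ) → M(2n, ℂ)`. -/
theorem sigmaMap_comm_thetaMap_tauMap (p' q' : ℕ) :
    (sigmaMap p' q' ∘ thetaMap p' q' = thetaMap p' q' ∘ sigmaMap p' q') ∧
    (sigmaMap p' q' ∘ tauMap p' q' = tauMap p' q' ∘ sigmaMap p' q') := by
  have hWc : ∀ W : Matrix (Fin (2 * (p' + q' + 1))) (Fin (2 * (p' + q' + 1))) ℂ,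
      (W.map (starRingEnd ℂ)).map (starRingEnd ℂ) = W := by
    intro W; ext i j; simp [Matrix.map_apply]
  have hnegmap : (-Jn p' q').map (starRingEnd ℂ) = -Jn p' q' := by
    ext i j
    simp only [Matrix.map_apply, Matrix.neg_apply, map_neg, neg_inj]
    have := congrFun (congrFun (Jn_map p' q') i) j
    simpa [Matrix.map_apply] using this
  constructor
  · funext W
    simp only [Function.comp_apply, sigmaMap, thetaMap, gZero_inv, Inn_inv,
      Matrix.map_mul, gZero_map, Inn_map, hWc]
    exact conj_comm_of_comm _ _ _ (Inn_gZero_comm p' q')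
  · funext W
    simp only [Function.comp_apply, sigmaMap, tauMap, Jn_inv, Inn_inv,
      Matrix.map_mul, hnegmap, Jn_map, Inn_map, hWc]
    exact conj_comm_of_anticomm _ _ _ (Inn_Jn_anticomm p' q')
end
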